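/- Let c be an immersed closed curve, h and k directions, and Φ : ℝ → ℝ a function differentiable at ℓ_c with derivative Φ'(ℓ_c). Then the functions t ↦ Φ(ℓ_{c+t·h})·Θ(c+t·h, k) and t ↦ Φ(ℓ_{c+t·k})·Θ(c+t·k, h) are differentiable at t = 0 (note c+t·h is immersed for t near 0), and −(d/dt)|_{t=0}[Φ(ℓ_{c+t·h})·Θ(c+t·h, k)] + (d/dt)|_{t=0}[Φ(ℓ_{c+t·k})·Θ(c+t·k, h)] = 3Φ(ℓ_c)·∫₀^{2π} ⟨c'×h, k⟩ dθ − Φ'(ℓ_c)·( (∫⟨D_s h, D_s c⟩ ds)·Θ(c,k) − (∫⟨D_s k, D_s c⟩ ds)·Θ(c,h) ), which also equals 3Φ(ℓ_c)·∫₀^{2π} ⟨c'×h, k⟩ dθ + Φ'(ℓ_c)·( (∫⟨h, D_s²c⟩ ds)·Θ(c,k) − (∫⟨k, D_s²c⟩ ds)·Θ(c,h) ). -/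

import Mathlib

noncomputable section

open Real

/-- Points of `ℝ³`. -/
abbrev V3 := Fin 3 → ℝ

/-- Euclidean inner product on `ℝ³`. -/
def dot3 (u v : V3) : ℝ := u 0 * v 0 + u 1 * v 1 + u 2 * v 2

/-- Cross product on `ℝ³`. -/
def cross3 (u v : V3) : V3 :=
  ![u 1 * v 2 - u 2 * v 1, u 2 * v 0 - u 0 * v 2, u 0 * v 1 - u 1 * v 0]

/-- Euclidean norm on `ℝ³`. -/
def norm3 (u : V3) : ℝ := Real.sqrt (dot3 u u)

/-- A closed curve: a smooth `2π`-periodic map `ℝ → ℝ³`. -/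
def IsClosedCurve (c : ℝ → V3) : Prop :=
  ContDiff ℝ (⊤ : ℕ∞) c ∧ ∀ θ, c (θ + 2 * π) = c θ

/-- An immersed closed curve: `c'(θ) ≠ 0` for all `θ`. -/
def IsImmersed (c : ℝ → V3) : Prop :=
  IsClosedCurve c ∧ ∀ θ, deriv c θ ≠ 0

/-- A direction (tangent vector): a smooth `2π`-periodic map `ℝ → ℝ³`. -/
def IsDirection (h : ℝ → V3) : Prop :=
  ContDiff ℝ (⊤ : ℕ∞) h ∧ ∀ θ, h (θ + 2 * π) = h θ

/-- Arc-length derivative along `c`: `D_s h = h'/|c'|`. -/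
def Ds (c h : ℝ → V3) : ℝ → V3 := fun θ => (norm3 (deriv c θ))⁻¹ • deriv h θ

/-- The unit tangent `T = D_s c = c'/|c'|`. -/
def unitT (c : ℝ → V3) : ℝ → V3 := Ds c c

/-- `D_s² c = D_s (D_s c)`. -/
def Ds2c (c : ℝ → V3) : ℝ → V3 := Ds c (Ds c c)

/-- Arc-length integral `∫ f ds = ∫₀^{2π} f(θ) |c'(θ)| dθ`. -/
def arcInt (c : ℝ → V3) (f : ℝ → ℝ) : ℝ :=
  ∫ θ in (0:ℝ)..(2 * π), f θ * norm3 (deriv c θ)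

/-- `L²(ds)` pairing `⟨f,g⟩_{L²} = ∫ ⟨f,g⟩ ds`. -/
def L2 (c f g : ℝ → V3) : ℝ := arcInt c (fun θ => dot3 (f θ) (g θ))

/-- Length `ℓ_c = ∫₀^{2π} |c'(θ)| dθ`. -/
def curveLen (c : ℝ → V3) : ℝ := ∫ θ in (0:ℝ)..(2 * π), norm3 (deriv c θ)

/-- The Liouville one-form for `L = id`: `Θ(c,h) = ∫₀^{2π} ⟨c × c', h⟩ dθ`. -/
def Theta (c h : ℝ → V3) : ℝ :=
  ∫ θ in (0:ℝ)..(2 * π), dot3 (cross3 (c θ) (deriv c θ)) (h θ)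

/-- The squared curvature `κ² = |D_s² c|²`. -/
def kappaSq (c : ℝ → V3) (θ : ℝ) : ℝ := dot3 (Ds2c c θ) (Ds2c c θ)

/-! ### Auxiliary lemmas -/

section Aux

open MeasureTheory intervalIntegral Metric Set
open scoped ContDiff

lemma dot3_nonneg (u : V3) : 0 ≤ dot3 u u := by
  unfold dot3; nlinarith [mul_self_nonneg (u 0), mul_self_nonneg (u 1), mul_self_nonneg (u 2)]

lemma dot3_pos {u : V3} (hu : u ≠ 0) : 0 < dot3 u u := by
  rcases (dot3_nonneg u).lt_or_eq with h | h
  · exact h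
  · exfalso; apply hu; funext i
    have h' := h.symm
    unfold dot3 at h'
    have h0 : u 0 = 0 := by
      nlinarith [mul_self_nonneg (u 0), mul_self_nonneg (u 1), mul_self_nonneg (u 2)]
    have h1 : u 1 = 0 := by
      nlinarith [mul_self_nonneg (u 0), mul_self_nonneg (u 1), mul_self_nonneg (u 2)]
    have h2 : u 2 = 0 := by
      nlinarith [mul_self_nonneg (u 0), mul_self_nonneg (u 1), mul_self_nonneg (u 2)]
    fin_cases i
    · simpa using h0
    · simpa using h1
    · simpa using h2

lemma norm3_nonneg (u : V3) : 0 ≤ norm3 u := Real.sqrt_nonneg _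
lemma norm3_pos {u : V3} (hu : u ≠ 0) : 0 < norm3 u := Real.sqrt_pos.2 (dot3_pos hu)
lemma norm3_ne {u : V3} (hu : u ≠ 0) : norm3 u ≠ 0 := ne_of_gt (norm3_pos hu)
lemma sq_norm3 (u : V3) : norm3 u * norm3 u = dot3 u u := Real.mul_self_sqrt (dot3_nonneg u)

lemma abs_dot3_le (u v : V3) : |dot3 u v| ≤ norm3 u * norm3 v := by
  have key : (dot3 u v)^2 ≤ dot3 u u * dot3 v v := by
    unfold dot3
    nlinarith [sq_nonneg (u 0 * v 1 - u 1 * v 0), sq_nonneg (u 0 * v 2 - u 2 * v 0),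
      sq_nonneg (u 1 * v 2 - u 2 * v 1)]
  calc |dot3 u v| = Real.sqrt ((dot3 u v)^2) := (Real.sqrt_sq_eq_abs _).symm
    _ ≤ Real.sqrt (dot3 u u * dot3 v v) := Real.sqrt_le_sqrt key
    _ = norm3 u * norm3 v := Real.sqrt_mul (dot3_nonneg u) _

lemma dot3_add_self (a b : V3) :
    dot3 (a + b) (a + b) = dot3 a a + 2 * dot3 a b + dot3 b b := by
  simp only [dot3, Pi.add_apply]; ring

lemma norm3_smul (x : ℝ) (v : V3) : norm3 (x • v) = |x| * norm3 v := by
  unfold norm3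
  have : dot3 (x • v) (x • v) = x^2 * dot3 v v := by
    simp only [dot3, Pi.smul_apply, smul_eq_mul]; ring
  rw [this, Real.sqrt_mul (sq_nonneg x), Real.sqrt_sq_eq_abs]

lemma norm3_sub_le (a b : V3) : norm3 a - norm3 b ≤ norm3 (a + b) := by
  have h1 : (norm3 a - norm3 b)^2 ≤ dot3 (a+b) (a+b) := by
    rw [dot3_add_self]
    have := abs_dot3_le a b
    have h2 := sq_norm3 a; have h3 := sq_norm3 b
    have := neg_abs_le (dot3 a b)
    nlinarith
  calc norm3 a - norm3 b ≤ |norm3 a - norm3 b| := le_abs_self _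
    _ = Real.sqrt ((norm3 a - norm3 b)^2) := (Real.sqrt_sq_eq_abs _).symm
    _ ≤ Real.sqrt (dot3 (a+b) (a+b)) := Real.sqrt_le_sqrt h1
    _ = norm3 (a+b) := rfl

lemma D_expand (u v w : V3) : dot3 (cross3 u v) w =
    (u 1 * v 2 - u 2 * v 1) * w 0 + (u 2 * v 0 - u 0 * v 2) * w 1
      + (u 0 * v 1 - u 1 * v 0) * w 2 := by
  simp [dot3, cross3]

lemma cont_comp {f : ℝ → V3} (hf : Continuous f) (i : Fin 3) :
    Continuous fun θ => f θ i := (continuous_apply i).comp hf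

lemma cont_dot3 {f g : ℝ → V3} (hf : Continuous f) (hg : Continuous g) :
    Continuous fun θ => dot3 (f θ) (g θ) := by
  unfold dot3
  exact (((cont_comp hf 0).mul (cont_comp hg 0)).add
    ((cont_comp hf 1).mul (cont_comp hg 1))).add ((cont_comp hf 2).mul (cont_comp hg 2))

lemma cont_D {f g e : ℝ → V3} (hf : Continuous f) (hg : Continuous g) (he : Continuous e) :
    Continuous fun θ => dot3 (cross3 (f θ) (g θ)) (e θ) := by
  simp only [D_expand]
  fun_prop

lemma cont_norm3 {f : ℝ → V3} (hf : Continuous f) :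
    Continuous fun θ => norm3 (f θ) :=
  Real.continuous_sqrt.comp (cont_dot3 hf hf)

lemma hasDerivAt_comp_pi {f : ℝ → V3} {f' : V3} {θ : ℝ} (hf : HasDerivAt f f' θ) (i : Fin 3) :
    HasDerivAt (fun t => f t i) (f' i) θ := hasDerivAt_pi.1 hf i

lemma hasDerivAt_dot3 {f g : ℝ → V3} {f' g' : V3} {θ : ℝ}
    (hf : HasDerivAt f f' θ) (hg : HasDerivAt g g' θ) :
    HasDerivAt (fun t => dot3 (f t) (g t)) (dot3 f' (g θ) + dot3 (f θ) g') θ := by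
  unfold dot3
  have H := (((hasDerivAt_comp_pi hf 0).mul (hasDerivAt_comp_pi hg 0)).add
    ((hasDerivAt_comp_pi hf 1).mul (hasDerivAt_comp_pi hg 1))).add
    ((hasDerivAt_comp_pi hf 2).mul (hasDerivAt_comp_pi hg 2))
  refine H.congr_deriv ?_
  ring

lemma hasDerivAt_D {f g e : ℝ → V3} {f' g' e' : V3} {θ : ℝ}
    (hf : HasDerivAt f f' θ) (hg : HasDerivAt g g' θ) (he : HasDerivAt e e' θ) :
    HasDerivAt (fun t => dot3 (cross3 (f t) (g t)) (e t))
      (dot3 (cross3 f' (g θ)) (e θ) + dot3 (cross3 (f θ) g') (e θ)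
        + dot3 (cross3 (f θ) (g θ)) e') θ := by
  simp only [D_expand]
  have c0 := hasDerivAt_comp_pi hf 0; have c1 := hasDerivAt_comp_pi hf 1
  have c2 := hasDerivAt_comp_pi hf 2
  have d0 := hasDerivAt_comp_pi hg 0; have d1 := hasDerivAt_comp_pi hg 1
  have d2 := hasDerivAt_comp_pi hg 2
  have e0 := hasDerivAt_comp_pi he 0; have e1 := hasDerivAt_comp_pi he 1
  have e2 := hasDerivAt_comp_pi he 2
  have H := (((((c1.mul d2).sub (c2.mul d1)).mul e0).add
    ((((c2.mul d0).sub (c0.mul d2))).mul e1)).add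
    ((((c0.mul d1).sub (c1.mul d0))).mul e2))
  refine H.congr_deriv ?_
  simp only [Pi.mul_apply, Pi.sub_apply]
  ring

lemma hasDerivAt_norm3_line (v w : V3) (x : ℝ) (hne : v + x • w ≠ 0) :
    HasDerivAt (fun t : ℝ => norm3 (v + t • w))
      (dot3 w (v + x • w) * (norm3 (v + x • w))⁻¹) x := by
  have poly : HasDerivAt (fun t : ℝ => dot3 (v + t • w) (v + t • w))
      (2 * dot3 v w + 2 * x * dot3 w w) x := by
    have hfun : (fun t : ℝ => dot3 (v + t • w) (v + t • w))
        = fun t => dot3 v v + 2 * dot3 v w * t + dot3 w w * (t * t) := by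
      funext t; simp only [dot3, Pi.add_apply, Pi.smul_apply, smul_eq_mul]; ring
    rw [hfun]
    have H := ((hasDerivAt_const x (dot3 v v)).add
      ((hasDerivAt_id x).const_mul (2 * dot3 v w))).add
      (((hasDerivAt_id x).mul (hasDerivAt_id x)).const_mul (dot3 w w))
    refine H.congr_deriv ?_
    simp only [id_eq]
    ring
  have hx0 : dot3 (v + x • w) (v + x • w) ≠ 0 := ne_of_gt (dot3_pos hne)
  have hs := (Real.hasDerivAt_sqrt hx0).comp x poly
  have hrw : (fun t : ℝ => norm3 (v + t • w))
      = fun t => Real.sqrt (dot3 (v + t • w) (v + t • w)) := rfl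
  rw [hrw]
  refine hs.congr_deriv (Eq.symm ?_)
  have hexp : dot3 w (v + x • w) = dot3 v w + x * dot3 w w := by
    simp only [dot3, Pi.add_apply, Pi.smul_apply, smul_eq_mul]; ring
  have hnn : Real.sqrt (dot3 (v + x • w) (v + x • w)) ≠ 0 := norm3_ne hne
  rw [hexp]
  show (dot3 v w + x * dot3 w w) * (Real.sqrt (dot3 (v + x • w) (v + x • w)))⁻¹ = _
  field_simp

lemma deriv_perturb {c h : ℝ → V3} (hc : Differentiable ℝ c) (hh : Differentiable ℝ h)
    (t θ : ℝ) :
    deriv (fun θ => c θ + t • h θ) θ = deriv c θ + t • deriv h θ :=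
  (((hc θ).hasDerivAt).add (((hh θ).hasDerivAt).const_smul t)).deriv

lemma deriv_periodic {f : ℝ → V3} (hp : ∀ θ, f (θ + 2*π) = f θ) (θ : ℝ) :
    deriv f (θ + 2*π) = deriv f θ := by
  have hfun : (fun x => f (x + 2*π)) = f := funext hp
  rw [← deriv_comp_add_const f (2*π) θ, hfun]

lemma integral_deriv_zero {f f' : ℝ → ℝ} (hf : ∀ θ, HasDerivAt f (f' θ) θ)
    (hcont : Continuous f') (hper : f (2*π) = f 0) :
    ∫ θ in (0:ℝ)..(2*π), f' θ = 0 := by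
  rw [intervalIntegral.integral_eq_sub_of_hasDerivAt (fun θ _ => hf θ)
    (hcont.intervalIntegrable _ _), hper, sub_self]

lemma contDiff_dot3 {f g : ℝ → V3} (hf : ContDiff ℝ ∞ f) (hg : ContDiff ℝ ∞ g) :
    ContDiff ℝ ∞ fun θ => dot3 (f θ) (g θ) := by
  unfold dot3
  exact (((contDiff_pi.1 hf 0).mul (contDiff_pi.1 hg 0)).add
    ((contDiff_pi.1 hf 1).mul (contDiff_pi.1 hg 1))).add
    ((contDiff_pi.1 hf 2).mul (contDiff_pi.1 hg 2))

lemma contDiff_norm3 {f : ℝ → V3} (hf : ContDiff ℝ ∞ f) (h0 : ∀ θ, f θ ≠ 0) :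
    ContDiff ℝ ∞ fun θ => norm3 (f θ) := by
  rw [contDiff_iff_contDiffAt]
  intro θ
  exact (Real.contDiffAt_sqrt (ne_of_gt (dot3_pos (h0 θ)))).comp θ
    (contDiff_dot3 hf hf).contDiffAt

/-- Derivative of the length of the perturbed curve. -/
lemma hasDerivAt_len {c h : ℝ → V3} (hc : IsImmersed c) (hh : IsDirection h) :
    HasDerivAt (fun t : ℝ => curveLen (fun θ => c θ + t • h θ))
      (∫ θ in (0:ℝ)..(2*π), dot3 (deriv h θ) (deriv c θ) * (norm3 (deriv c θ))⁻¹) 0 := by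
  obtain ⟨⟨hcs, hcp⟩, hcne⟩ := hc
  obtain ⟨hhs, hhp⟩ := hh
  have hcd : Differentiable ℝ c := (hcs.of_le (le_refl (∞ : WithTop ℕ∞))).differentiable (by simp)
  have hhd : Differentiable ℝ h := (hhs.of_le (le_refl (∞ : WithTop ℕ∞))).differentiable (by simp)
  have hc' : Continuous (deriv c) :=
    ((contDiff_infty_iff_deriv.1 (hcs.of_le (by simp))).2).continuous
  have hh' : Continuous (deriv h) :=
    ((contDiff_infty_iff_deriv.1 (hhs.of_le (by simp))).2).continuous
  -- compactness bounds
  have hne : (Set.Icc (0:ℝ) (2*π)).Nonempty := ⟨0, le_refl 0, Real.two_pi_pos.le⟩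
  obtain ⟨θm, hθm, hm'⟩ := isCompact_Icc.exists_isMinOn hne
    (cont_norm3 hc').continuousOn
  obtain ⟨θM, hθM, hM'⟩ := isCompact_Icc.exists_isMaxOn hne
    (cont_norm3 hh').continuousOn
  have hm : ∀ θ ∈ Set.Icc (0:ℝ) (2*π), norm3 (deriv c θm) ≤ norm3 (deriv c θ) :=
    fun θ hθ => hm' hθ
  have hM : ∀ θ ∈ Set.Icc (0:ℝ) (2*π), norm3 (deriv h θ) ≤ norm3 (deriv h θM) :=
    fun θ hθ => hM' hθ
  set m := norm3 (deriv c θm) with hmdef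
  set M := norm3 (deriv h θM) with hMdef
  have hmpos : 0 < m := norm3_pos (hcne θm)
  have hMnn : 0 ≤ M := norm3_nonneg _
  set ε := m / (M + 1) with hεdef
  have hεpos : 0 < ε := div_pos hmpos (by linarith)
  have hεm : ε * (M + 1) = m := div_mul_cancel₀ m (by linarith)
  have key : ∀ θ ∈ Set.Icc (0:ℝ) (2*π), ∀ x ∈ ball (0:ℝ) ε,
      deriv c θ + x • deriv h θ ≠ 0 := by
    intro θ hθ x hx H
    have h1 : norm3 (deriv c θ) - norm3 (x • deriv h θ)
        ≤ norm3 (deriv c θ + x • deriv h θ) := norm3_sub_le _ _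
    rw [H] at h1
    have hn0 : norm3 (0 : V3) = 0 := by
      show Real.sqrt (dot3 0 0) = 0
      have : dot3 (0 : V3) 0 = 0 := by simp [dot3]
      rw [this, Real.sqrt_zero]
    rw [hn0, norm3_smul] at h1
    have hxb : |x| < ε := by rwa [mem_ball, dist_zero_right, Real.norm_eq_abs] at hx
    have hcm : m ≤ norm3 (deriv c θ) := hm θ hθ
    have hhM : norm3 (deriv h θ) ≤ M := hM θ hθ
    nlinarith [abs_nonneg x, norm3_nonneg (deriv h θ),
      mul_le_mul_of_nonneg_left hhM (abs_nonneg x),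
      mul_lt_mul_of_pos_right hxb (show (0:ℝ) < M + 1 by linarith)]
  -- the parametrized family
  set F : ℝ → ℝ → ℝ := fun x θ => norm3 (deriv c θ + x • deriv h θ) with hFdef
  set F' : ℝ → ℝ → ℝ := fun x θ =>
    dot3 (deriv h θ) (deriv c θ + x • deriv h θ)
      * (norm3 (deriv c θ + x • deriv h θ))⁻¹ with hF'def
  have hcontF : ∀ x : ℝ, Continuous (F x) := fun x =>
    cont_norm3 (hc'.add (hh'.const_smul x))
  have hne0 : ∀ θ, deriv c θ + (0:ℝ) • deriv h θ ≠ 0 := by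
    intro θ
    have : deriv c θ + (0:ℝ) • deriv h θ = deriv c θ := by simp
    rw [this]; exact hcne θ
  have hsub : ∀ θ, θ ∈ Set.uIoc (0:ℝ) (2*π) → θ ∈ Set.Icc (0:ℝ) (2*π) := by
    intro θ hθ
    rw [Set.uIoc_of_le Real.two_pi_pos.le] at hθ
    exact Set.Ioc_subset_Icc_self hθ
  have hF'0cont : Continuous (F' 0) := by
    apply Continuous.mul
    · exact cont_dot3 hh' (hc'.add (hh'.const_smul (0:ℝ)))
    · exact (cont_norm3 (hc'.add (hh'.const_smul (0:ℝ)))).inv₀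
        fun θ => norm3_ne (hne0 θ)
  have main := intervalIntegral.hasDerivAt_integral_of_dominated_loc_of_deriv_le
    (F := F) (F' := F') (x₀ := (0:ℝ)) (a := (0:ℝ)) (b := 2*π) (μ := volume)
    (bound := fun θ => norm3 (deriv h θ)) (ball_mem_nhds 0 hεpos)
    (Filter.Eventually.of_forall fun x => (hcontF x).aestronglyMeasurable)
    ((hcontF 0).intervalIntegrable _ _)
    hF'0cont.aestronglyMeasurable
    (Filter.Eventually.of_forall (fun θ hθ x hx => by
      have hu : deriv c θ + x • deriv h θ ≠ 0 := key θ (hsub θ hθ) x hx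
      show ‖dot3 (deriv h θ) (deriv c θ + x • deriv h θ)
        * (norm3 (deriv c θ + x • deriv h θ))⁻¹‖ ≤ norm3 (deriv h θ)
      rw [Real.norm_eq_abs, abs_mul, abs_inv, abs_of_pos (norm3_pos hu)]
      calc |dot3 (deriv h θ) (deriv c θ + x • deriv h θ)|
            * (norm3 (deriv c θ + x • deriv h θ))⁻¹
          ≤ (norm3 (deriv h θ) * norm3 (deriv c θ + x • deriv h θ))
            * (norm3 (deriv c θ + x • deriv h θ))⁻¹ :=
            mul_le_mul_of_nonneg_right (abs_dot3_le _ _)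
              (inv_nonneg.2 (norm3_nonneg _))
        _ = norm3 (deriv h θ) := by
            rw [mul_assoc, mul_inv_cancel₀ (norm3_ne hu), mul_one]))
    ((cont_norm3 hh').intervalIntegrable _ _)
    (Filter.Eventually.of_forall (fun θ hθ x hx =>
      hasDerivAt_norm3_line (deriv c θ) (deriv h θ) x (key θ (hsub θ hθ) x hx)))
  have hres := main.2
  have hfun : (fun x : ℝ => ∫ θ in (0:ℝ)..(2*π), F x θ)
      = fun t : ℝ => curveLen (fun θ => c θ + t • h θ) := by
    funext x
    unfold curveLen
    apply intervalIntegral.integral_congr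
    intro θ _
    show norm3 (deriv c θ + x • deriv h θ) = norm3 (deriv (fun θ => c θ + x • h θ) θ)
    rw [deriv_perturb hcd hhd]
  rw [hfun] at hres
  refine hres.congr_deriv (Eq.symm ?_)
  apply intervalIntegral.integral_congr
  intro θ _
  show dot3 (deriv h θ) (deriv c θ) * (norm3 (deriv c θ))⁻¹
    = dot3 (deriv h θ) (deriv c θ + (0:ℝ) • deriv h θ)
      * (norm3 (deriv c θ + (0:ℝ) • deriv h θ))⁻¹
  have : deriv c θ + (0:ℝ) • deriv h θ = deriv c θ := by simp
  rw [this]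

/-- Derivative of `t ↦ Θ(c + t h, k)` at `0`. -/
lemma hasDerivAt_theta {c h k : ℝ → V3} (hcd : Differentiable ℝ c)
    (hc' : Continuous (deriv c)) (hcc : Continuous c)
    (hhd : Differentiable ℝ h) (hh' : Continuous (deriv h)) (hhc : Continuous h)
    (hkc : Continuous k) :
    HasDerivAt (fun t : ℝ => Theta (fun θ => c θ + t • h θ) k)
      (∫ θ in (0:ℝ)..(2*π), (dot3 (cross3 (h θ) (deriv c θ)) (k θ)
        + dot3 (cross3 (c θ) (deriv h θ)) (k θ))) 0 := by
  set B := ∫ θ in (0:ℝ)..(2*π), (dot3 (cross3 (h θ) (deriv c θ)) (k θ)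
    + dot3 (cross3 (c θ) (deriv h θ)) (k θ)) with hBdef
  set C := ∫ θ in (0:ℝ)..(2*π), dot3 (cross3 (h θ) (deriv h θ)) (k θ) with hCdef
  have hfun : (fun t : ℝ => Theta (fun θ => c θ + t • h θ) k)
      = fun t => Theta c k + t * B + t * t * C := by
    funext t
    unfold Theta
    have h1 : ∀ θ ∈ Set.uIcc (0:ℝ) (2*π),
        dot3 (cross3 ((fun θ => c θ + t • h θ) θ)
          (deriv (fun θ => c θ + t • h θ) θ)) (k θ)
        = dot3 (cross3 (c θ) (deriv c θ)) (k θ)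
          + t * (dot3 (cross3 (h θ) (deriv c θ)) (k θ)
            + dot3 (cross3 (c θ) (deriv h θ)) (k θ))
          + t * t * dot3 (cross3 (h θ) (deriv h θ)) (k θ) := by
      intro θ _
      show dot3 (cross3 (c θ + t • h θ) (deriv (fun θ => c θ + t • h θ) θ)) (k θ) = _
      rw [deriv_perturb hcd hhd]
      simp only [D_expand, Pi.add_apply, Pi.smul_apply, smul_eq_mul]
      ring
    rw [intervalIntegral.integral_congr h1]
    have i1 : IntervalIntegrable
        (fun θ => dot3 (cross3 (c θ) (deriv c θ)) (k θ)) volume 0 (2*π) :=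
      (cont_D hcc hc' hkc).intervalIntegrable _ _
    have i2 : IntervalIntegrable (fun θ => t * (dot3 (cross3 (h θ) (deriv c θ)) (k θ)
        + dot3 (cross3 (c θ) (deriv h θ)) (k θ))) volume 0 (2*π) :=
      (continuous_const.mul ((cont_D hhc hc' hkc).add (cont_D hcc hh' hkc))).intervalIntegrable _ _
    have i3 : IntervalIntegrable
        (fun θ => t * t * dot3 (cross3 (h θ) (deriv h θ)) (k θ)) volume 0 (2*π) :=
      (continuous_const.mul (cont_D hhc hh' hkc)).intervalIntegrable _ _
    rw [intervalIntegral.integral_add (i1.add i2) i3,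
      intervalIntegral.integral_add i1 i2,
      intervalIntegral.integral_const_mul, intervalIntegral.integral_const_mul]
  rw [hfun]
  have H := ((hasDerivAt_const (0:ℝ) (Theta c k)).add
    ((hasDerivAt_id (0:ℝ)).const_mul B)).add
    (((hasDerivAt_id (0:ℝ)).mul (hasDerivAt_id (0:ℝ))).const_mul C)
  have hEq : (fun t : ℝ => Theta c k + t * B + t * t * C)
      = fun t : ℝ => (Theta c k + B * t) + C * (t * t) := by
    funext t; ring
  rw [hEq]
  refine H.congr_deriv ?_
  simp

end Aux

open scoped ContDiff

/-- the presymplectic form induced by a length weight `Φ` is given by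
`Ω^{Φ(ℓ)} = Φ(ℓ)Ω^{id} − Φ'(ℓ)( (∫⟨D_s h,D_s c⟩ds)Θ(c,k) − (∫⟨D_s k,D_s c⟩ds)Θ(c,h) )`,
which also equals the expression with `+Φ'(ℓ)( (∫⟨h,D_s²c⟩ds)Θ(c,k) − … )`. -/
theorem length_weighted_presymplectic_formula (c h k : ℝ → V3) (Φ : ℝ → ℝ) (q : ℝ)
    (hc : IsImmersed c) (hh : IsDirection h) (hk : IsDirection k)
    (hΦ : HasDerivAt Φ q (curveLen c)) :
    ∃ a b : ℝ,
      HasDerivAt (fun t : ℝ => Φ (curveLen (fun θ => c θ + t • h θ)) *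
        Theta (fun θ => c θ + t • h θ) k) a 0 ∧
      HasDerivAt (fun t : ℝ => Φ (curveLen (fun θ => c θ + t • k θ)) *
        Theta (fun θ => c θ + t • k θ) h) b 0 ∧
      -a + b = 3 * Φ (curveLen c) *
          (∫ θ in (0:ℝ)..(2 * π), dot3 (cross3 (deriv c θ) (h θ)) (k θ))
        - q * (arcInt c (fun θ => dot3 (Ds c h θ) (Ds c c θ)) * Theta c k
             - arcInt c (fun θ => dot3 (Ds c k θ) (Ds c c θ)) * Theta c h) ∧
      -a + b = 3 * Φ (curveLen c) *
          (∫ θ in (0:ℝ)..(2 * π), dot3 (cross3 (deriv c θ) (h θ)) (k θ))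
        + q * (arcInt c (fun θ => dot3 (h θ) (Ds2c c θ)) * Theta c k
             - arcInt c (fun θ => dot3 (k θ) (Ds2c c θ)) * Theta c h) := by
  obtain ⟨⟨hcs, hcp⟩, hcne⟩ := id hc
  obtain ⟨hhs, hhp⟩ := id hh
  obtain ⟨hks, hkp⟩ := id hk
  have hcd : Differentiable ℝ c := (hcs.of_le (le_refl (∞ : WithTop ℕ∞))).differentiable (by simp)
  have hhd : Differentiable ℝ h := (hhs.of_le (le_refl (∞ : WithTop ℕ∞))).differentiable (by simp)
  have hkd : Differentiable ℝ k := (hks.of_le (le_refl (∞ : WithTop ℕ∞))).differentiable (by simp)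
  have hcc : Continuous c := hcd.continuous
  have hhc : Continuous h := hhd.continuous
  have hkc : Continuous k := hkd.continuous
  have hC' : ContDiff ℝ ∞ (deriv c) := (contDiff_infty_iff_deriv.1 (hcs.of_le (by simp))).2
  have hc' : Continuous (deriv c) := hC'.continuous
  have hh' : Continuous (deriv h) :=
    ((contDiff_infty_iff_deriv.1 (hhs.of_le (by simp))).2).continuous
  have hk' : Continuous (deriv k) :=
    ((contDiff_infty_iff_deriv.1 (hks.of_le (by simp))).2).continuous
  -- the unit tangent
  set T : ℝ → V3 := Ds c c with hTdef
  have hTsmooth : ContDiff ℝ ∞ T := by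
    have hn : ContDiff ℝ ∞ (fun θ => norm3 (deriv c θ)) := contDiff_norm3 hC' hcne
    exact (hn.inv fun θ => norm3_ne (hcne θ)).smul hC'
  have hTd : Differentiable ℝ T := (contDiff_infty_iff_deriv.1 hTsmooth).1
  have hT' : Continuous (deriv T) := ((contDiff_infty_iff_deriv.1 hTsmooth).2).continuous
  have hTc : Continuous T := hTd.continuous
  have hTp : ∀ θ, T (θ + 2*π) = T θ := by
    intro θ
    show (norm3 (deriv c (θ + 2*π)))⁻¹ • deriv c (θ + 2*π)
      = (norm3 (deriv c θ))⁻¹ • deriv c θ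
    rw [deriv_periodic hcp]
  -- the derivative data
  set ah := ∫ θ in (0:ℝ)..(2*π), dot3 (deriv h θ) (deriv c θ) * (norm3 (deriv c θ))⁻¹
    with hahdef
  set ak := ∫ θ in (0:ℝ)..(2*π), dot3 (deriv k θ) (deriv c θ) * (norm3 (deriv c θ))⁻¹
    with hakdef
  set Bhk := ∫ θ in (0:ℝ)..(2*π), (dot3 (cross3 (h θ) (deriv c θ)) (k θ)
    + dot3 (cross3 (c θ) (deriv h θ)) (k θ)) with hBhkdef
  set Bkh := ∫ θ in (0:ℝ)..(2*π), (dot3 (cross3 (k θ) (deriv c θ)) (h θ)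
    + dot3 (cross3 (c θ) (deriv k θ)) (h θ)) with hBkhdef
  set Z := ∫ θ in (0:ℝ)..(2 * π), dot3 (cross3 (deriv c θ) (h θ)) (k θ) with hZdef
  have hLh : HasDerivAt (fun t : ℝ => curveLen (fun θ => c θ + t • h θ)) ah 0 :=
    hasDerivAt_len hc hh
  have hLk : HasDerivAt (fun t : ℝ => curveLen (fun θ => c θ + t • k θ)) ak 0 :=
    hasDerivAt_len hc hk
  have hTh : HasDerivAt (fun t : ℝ => Theta (fun θ => c θ + t • h θ) k) Bhk 0 :=
    hasDerivAt_theta hcd hc' hcc hhd hh' hhc hkc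
  have hTk : HasDerivAt (fun t : ℝ => Theta (fun θ => c θ + t • k θ) h) Bkh 0 :=
    hasDerivAt_theta hcd hc' hcc hkd hk' hkc hhc
  have e0h : (fun θ => c θ + (0:ℝ) • h θ) = c := by funext θ; simp
  have e0k : (fun θ => c θ + (0:ℝ) • k θ) = c := by funext θ; simp
  have hΦ0h : HasDerivAt Φ q (curveLen (fun θ => c θ + (0:ℝ) • h θ)) := by
    rw [e0h]; exact hΦ
  have hΦ0k : HasDerivAt Φ q (curveLen (fun θ => c θ + (0:ℝ) • k θ)) := by
    rw [e0k]; exact hΦ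
  have hAh : HasDerivAt (fun t : ℝ => Φ (curveLen (fun θ => c θ + t • h θ))) (q * ah) 0 :=
    hΦ0h.comp 0 hLh
  have hAk : HasDerivAt (fun t : ℝ => Φ (curveLen (fun θ => c θ + t • k θ))) (q * ak) 0 :=
    hΦ0k.comp 0 hLk
  have hA : HasDerivAt (fun t : ℝ => Φ (curveLen (fun θ => c θ + t • h θ)) *
      Theta (fun θ => c θ + t • h θ) k) (q * ah * Theta c k + Φ (curveLen c) * Bhk) 0 := by
    refine (hAh.mul hTh).congr_deriv ?_
    simp only [e0h]
  have hB : HasDerivAt (fun t : ℝ => Φ (curveLen (fun θ => c θ + t • k θ)) *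
      Theta (fun θ => c θ + t • k θ) h) (q * ak * Theta c h + Φ (curveLen c) * Bkh) 0 := by
    refine (hAk.mul hTk).congr_deriv ?_
    simp only [e0k]
  -- integration by parts for the triple product
  have hDer : ∀ θ, HasDerivAt (fun θ => dot3 (cross3 (c θ) (k θ)) (h θ))
      (dot3 (cross3 (deriv c θ) (k θ)) (h θ) + dot3 (cross3 (c θ) (deriv k θ)) (h θ)
        + dot3 (cross3 (c θ) (k θ)) (deriv h θ)) θ :=
    fun θ => hasDerivAt_D (hcd θ).hasDerivAt (hkd θ).hasDerivAt (hhd θ).hasDerivAt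
  have hzero : ∫ θ in (0:ℝ)..(2*π), (dot3 (cross3 (deriv c θ) (k θ)) (h θ)
      + dot3 (cross3 (c θ) (deriv k θ)) (h θ)
      + dot3 (cross3 (c θ) (k θ)) (deriv h θ)) = 0 := by
    apply integral_deriv_zero hDer
    · exact ((cont_D hc' hkc hhc).add (cont_D hcc hk' hhc)).add (cont_D hcc hkc hh')
    · have h2 : (2*π : ℝ) = 0 + 2*π := by ring
      rw [h2, hcp, hkp, hhp]
  have if1 : IntervalIntegrable (fun θ => dot3 (cross3 (k θ) (deriv c θ)) (h θ)
      + dot3 (cross3 (c θ) (deriv k θ)) (h θ)) MeasureTheory.volume 0 (2*π) :=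
    ((cont_D hkc hc' hhc).add (cont_D hcc hk' hhc)).intervalIntegrable _ _
  have if2 : IntervalIntegrable (fun θ => dot3 (cross3 (h θ) (deriv c θ)) (k θ)
      + dot3 (cross3 (c θ) (deriv h θ)) (k θ)) MeasureTheory.volume 0 (2*π) :=
    ((cont_D hhc hc' hkc).add (cont_D hcc hh' hkc)).intervalIntegrable _ _
  have if3 : IntervalIntegrable (fun θ => (3:ℝ) * dot3 (cross3 (deriv c θ) (h θ)) (k θ))
      MeasureTheory.volume 0 (2*π) :=
    (continuous_const.mul (cont_D hc' hhc hkc)).intervalIntegrable _ _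
  have hI : Bkh - Bhk = 3 * Z := by
    have isub : ∫ θ in (0:ℝ)..(2*π), ((dot3 (cross3 (k θ) (deriv c θ)) (h θ)
          + dot3 (cross3 (c θ) (deriv k θ)) (h θ))
        - (dot3 (cross3 (h θ) (deriv c θ)) (k θ) + dot3 (cross3 (c θ) (deriv h θ)) (k θ))
        - 3 * dot3 (cross3 (deriv c θ) (h θ)) (k θ))
        = Bkh - Bhk - 3 * Z := by
      rw [intervalIntegral.integral_sub (if1.sub if2) if3,
        intervalIntegral.integral_sub if1 if2, intervalIntegral.integral_const_mul]
    have icong : ∫ θ in (0:ℝ)..(2*π), ((dot3 (cross3 (k θ) (deriv c θ)) (h θ)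
          + dot3 (cross3 (c θ) (deriv k θ)) (h θ))
        - (dot3 (cross3 (h θ) (deriv c θ)) (k θ) + dot3 (cross3 (c θ) (deriv h θ)) (k θ))
        - 3 * dot3 (cross3 (deriv c θ) (h θ)) (k θ))
        = ∫ θ in (0:ℝ)..(2*π), (dot3 (cross3 (deriv c θ) (k θ)) (h θ)
          + dot3 (cross3 (c θ) (deriv k θ)) (h θ)
          + dot3 (cross3 (c θ) (k θ)) (deriv h θ)) := by
      apply intervalIntegral.integral_congr
      intro θ _
      simp only [D_expand]
      ring
    have : Bkh - Bhk - 3 * Z = 0 := by rw [← isub, icong, hzero]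
    linarith
  -- the first-variation identities for arc-length pairings
  have hIIh : arcInt c (fun θ => dot3 (Ds c h θ) (Ds c c θ)) = ah := by
    rw [hahdef]
    unfold arcInt
    apply intervalIntegral.integral_congr
    intro θ _
    show dot3 ((norm3 (deriv c θ))⁻¹ • deriv h θ) ((norm3 (deriv c θ))⁻¹ • deriv c θ)
      * norm3 (deriv c θ) = dot3 (deriv h θ) (deriv c θ) * (norm3 (deriv c θ))⁻¹
    have hn := norm3_ne (hcne θ)
    simp only [dot3, Pi.smul_apply, smul_eq_mul]
    field_simp
  have hIIk : arcInt c (fun θ => dot3 (Ds c k θ) (Ds c c θ)) = ak := by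
    rw [hakdef]
    unfold arcInt
    apply intervalIntegral.integral_congr
    intro θ _
    show dot3 ((norm3 (deriv c θ))⁻¹ • deriv k θ) ((norm3 (deriv c θ))⁻¹ • deriv c θ)
      * norm3 (deriv c θ) = dot3 (deriv k θ) (deriv c θ) * (norm3 (deriv c θ))⁻¹
    have hn := norm3_ne (hcne θ)
    simp only [dot3, Pi.smul_apply, smul_eq_mul]
    field_simp
  -- integration by parts against the unit tangent
  have hIII : ∀ (g : ℝ → V3), Differentiable ℝ g → Continuous (deriv g) →
      (∀ θ, g (θ + 2*π) = g θ) →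
      arcInt c (fun θ => dot3 (g θ) (Ds2c c θ))
        = -(∫ θ in (0:ℝ)..(2*π), dot3 (deriv g θ) (deriv c θ) * (norm3 (deriv c θ))⁻¹) := by
    intro g hgd hg' hgp
    have hgc : Continuous g := hgd.continuous
    have e1 : arcInt c (fun θ => dot3 (g θ) (Ds2c c θ))
        = ∫ θ in (0:ℝ)..(2*π), dot3 (g θ) (deriv T θ) := by
      unfold arcInt
      apply intervalIntegral.integral_congr
      intro θ _
      show dot3 (g θ) ((norm3 (deriv c θ))⁻¹ • deriv T θ) * norm3 (deriv c θ)
        = dot3 (g θ) (deriv T θ)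
      have hn := norm3_ne (hcne θ)
      simp only [dot3, Pi.smul_apply, smul_eq_mul]
      field_simp
    have e2 : ∫ θ in (0:ℝ)..(2*π), dot3 (deriv g θ) (deriv c θ) * (norm3 (deriv c θ))⁻¹
        = ∫ θ in (0:ℝ)..(2*π), dot3 (deriv g θ) (T θ) := by
      apply intervalIntegral.integral_congr
      intro θ _
      show dot3 (deriv g θ) (deriv c θ) * (norm3 (deriv c θ))⁻¹
        = dot3 (deriv g θ) ((norm3 (deriv c θ))⁻¹ • deriv c θ)
      simp only [dot3, Pi.smul_apply, smul_eq_mul]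
      ring
    have hDer2 : ∀ θ, HasDerivAt (fun θ => dot3 (g θ) (T θ))
        (dot3 (deriv g θ) (T θ) + dot3 (g θ) (deriv T θ)) θ :=
      fun θ => hasDerivAt_dot3 (hgd θ).hasDerivAt (hTd θ).hasDerivAt
    have hz : ∫ θ in (0:ℝ)..(2*π), (dot3 (deriv g θ) (T θ) + dot3 (g θ) (deriv T θ)) = 0 := by
      apply integral_deriv_zero hDer2
      · exact (cont_dot3 hg' hTc).add (cont_dot3 hgc hT')
      · have h2 : (2*π:ℝ) = 0 + 2*π := by ring
        rw [h2, hgp, hTp]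
    have hsplit : ∫ θ in (0:ℝ)..(2*π), (dot3 (deriv g θ) (T θ) + dot3 (g θ) (deriv T θ))
        = (∫ θ in (0:ℝ)..(2*π), dot3 (deriv g θ) (T θ))
          + ∫ θ in (0:ℝ)..(2*π), dot3 (g θ) (deriv T θ) :=
      intervalIntegral.integral_add ((cont_dot3 hg' hTc).intervalIntegrable _ _)
        ((cont_dot3 hgc hT').intervalIntegrable _ _)
    rw [e1, e2]
    linarith [hsplit, hz]
  have hIIIh := hIII h hhd hh' hhp
  have hIIIk := hIII k hkd hk' hkp
  rw [← hahdef] at hIIIh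
  rw [← hakdef] at hIIIk
  refine ⟨q * ah * Theta c k + Φ (curveLen c) * Bhk,
          q * ak * Theta c h + Φ (curveLen c) * Bkh, hA, hB, ?_, ?_⟩
  · rw [hIIh, hIIk]
    linear_combination Φ (curveLen c) * hI
  · rw [hIIIh, hIIIk]
    linear_combination Φ (curveLen c) * hI
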